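/- Let r, n be positive integers with r ≡ n (mod q+1), let a, b, v ∈ F_{q²}* with v ∉ μ_{q+1}, and set B(X) := a(X+v^{-q})ⁿ + b(X+v)ⁿ and f(X) := X^r B(X^{q-1}). Then f permutes F_{q²} if and only if bvⁿ/a ∉ μ_{q+1}, gcd(r, q-1) = 1, and gcd(n, q+1) = 1. -/

import Mathlib

open Polynomial




lemma aux_bijOn_of_injOn {α : Type*} [Finite α] {f : α → α} {s t : Set α}
    (h1 : Set.InjOn f s) (h2 : Set.MapsTo f s t) (hcard : s.ncard = t.ncard) :
    Set.BijOn f s t := by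
  refine ⟨h2, h1, ?_⟩
  have himg : f '' s = t :=
    Set.eq_of_subset_of_ncard_le (Set.image_subset_iff.2 h2)
      (by rw [Set.ncard_image_of_injOn h1, hcard]) (Set.toFinite t)
  rw [Set.SurjOn, himg]

lemma aux_fiber_ncard {F : Type*} [Field F] [Finite F] {m : ℕ} {c d : F} (x₀ y₀ : F)
    (hx : x₀ ^ m = c) (hy : y₀ ^ m = d) (hx0 : x₀ ≠ 0) (hy0 : y₀ ≠ 0) :
    {x : F | x ^ m = c}.ncard = {x : F | x ^ m = d}.ncard := by
  have hc0 : c ≠ 0 := hx ▸ pow_ne_zero _ hx0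
  have hd0 : d ≠ 0 := hy ▸ pow_ne_zero _ hy0
  have himg : (fun x : F => y₀ / x₀ * x) '' {x : F | x ^ m = c} = {x : F | x ^ m = d} := by
    ext z
    constructor
    · rintro ⟨x, hxm, rfl⟩
      simp only [Set.mem_setOf_eq] at hxm ⊢
      rw [mul_pow, div_pow, hxm, hy, hx]
      field_simp
    · intro hz
      simp only [Set.mem_setOf_eq] at hz
      refine ⟨x₀ / y₀ * z, ?_, ?_⟩
      · simp only [Set.mem_setOf_eq, mul_pow, div_pow, hz, hx, hy]
        field_simp
      · field_simp
  rw [← himg, Set.ncard_image_of_injective _ (mul_right_injective₀ (div_ne_zero hy0 hx0))]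

lemma aux_exists_ne_one {F : Type*} [Field F] [Fintype F] {d : ℕ} (h2 : 2 ≤ d)
    (hd : d ∣ Fintype.card F - 1) : ∃ ζ : F, ζ ^ d = 1 ∧ ζ ≠ 1 := by
  obtain ⟨g, hg⟩ := IsCyclic.exists_ofOrder_eq_natCard (α := Fˣ)
  have hcard : Nat.card Fˣ = Fintype.card F - 1 := by
    rw [Nat.card_units, Nat.card_eq_fintype_card]
  obtain ⟨k, hk⟩ := hd
  have hk0 : 0 < k := by
    rcases Nat.eq_zero_or_pos k with rfl | h
    · exfalso
      have h1 := Fintype.one_lt_card (α := F)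
      simp at hk
      omega
    · exact h
  refine ⟨((g ^ k : Fˣ) : F), ?_, ?_⟩
  · rw [← Units.val_pow_eq_pow_val, ← pow_mul, mul_comm k d, ← hk, ← hcard, ← hg,
      pow_orderOf_eq_one]
    simp
  · intro h
    have h1 : (g ^ k : Fˣ) = 1 := Units.ext (by simpa using h)
    have hdvd : orderOf g ∣ k := orderOf_dvd_of_pow_eq_one h1
    rw [hg, hcard, hk] at hdvd
    have := Nat.le_of_dvd hk0 hdvd
    nlinarith

lemma aux_pow_surj {F : Type*} [Field F] [Fintype F] {q : ℕ} (hq : 2 ≤ q)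
    (hF : Fintype.card F = q ^ 2) {y : F} (hy : y ^ (q + 1) = 1) :
    ∃ x : F, x ≠ 0 ∧ x ^ (q - 1) = y := by
  obtain ⟨g, hg⟩ := IsCyclic.exists_generator (α := Fˣ)
  have horder : orderOf g = Nat.card Fˣ := orderOf_eq_card_of_forall_mem_zpowers hg
  have hcard : Nat.card Fˣ = q ^ 2 - 1 := by
    rw [Nat.card_units, Nat.card_eq_fintype_card, hF]
  have hy0 : y ≠ 0 := by
    intro h; rw [h] at hy; simp at hy
  lift y to Fˣ using isUnit_iff_ne_zero.2 hy0 with yu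
  obtain ⟨m, hm⟩ := mem_powers_iff_mem_zpowers.2 (hg yu)
  simp only [] at hm
  have hyu : yu ^ (q + 1) = 1 := by
    ext; push_cast
    exact_mod_cast hy
  have hdvd : orderOf g ∣ m * (q + 1) := by
    apply orderOf_dvd_of_pow_eq_one
    rw [pow_mul, hm, hyu]
  rw [horder, hcard] at hdvd
  have hfact : q ^ 2 - 1 = (q - 1) * (q + 1) := by
    obtain ⟨k, rfl⟩ : ∃ k, q = k + 2 := ⟨q - 2, by omega⟩
    have h1 : (k + 2) ^ 2 = (k + 2 - 1) * (k + 2 + 1) + 1 := by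
      have : k + 2 - 1 = k + 1 := by omega
      rw [this]; ring
    omega
  rw [hfact] at hdvd
  have hdvd2 : (q - 1) ∣ m := by
    have := (Nat.mul_dvd_mul_iff_right (show 0 < q + 1 by omega)).1 hdvd
    exact this
  obtain ⟨j, hj⟩ := hdvd2
  refine ⟨((g ^ j : Fˣ) : F), by simp, ?_⟩
  rw [← Units.val_pow_eq_pow_val, ← pow_mul, mul_comm j (q-1), ← hj, hm]




lemma aux_zieve {F : Type*} [Field F] [Fintype F] {q : ℕ} (hq : 2 ≤ q)
    (hF : Fintype.card F = q ^ 2) (r : ℕ) (hr : 0 < r) (h : F[X])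
    (haux_ne : ∀ {d : ℕ}, 2 ≤ d → d ∣ Fintype.card F - 1 → ∃ ζ : F, ζ ^ d = 1 ∧ ζ ≠ 1)
    (haux_surj : ∀ {y : F}, y ^ (q + 1) = 1 → ∃ x : F, x ≠ 0 ∧ x ^ (q - 1) = y)
    (haux_fiber : ∀ {m : ℕ} {c d : F} (x₀ y₀ : F), x₀ ^ m = c → y₀ ^ m = d → x₀ ≠ 0 → y₀ ≠ 0 →
      {x : F | x ^ m = c}.ncard = {x : F | x ^ m = d}.ncard) :
    Function.Bijective (fun x : F => x ^ r * h.eval (x ^ (q - 1))) ↔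
      Nat.gcd r (q - 1) = 1 ∧
        Set.BijOn (fun t : F => t ^ r * h.eval t ^ (q - 1))
          {x : F | x ^ (q + 1) = 1} {x : F | x ^ (q + 1) = 1} := by
  set f : F → F := fun x => x ^ r * h.eval (x ^ (q - 1)) with hf
  set g : F → F := fun t => t ^ r * h.eval t ^ (q - 1) with hg
  set μ : Set F := {x : F | x ^ (q + 1) = 1} with hμ
  have hq10 : q - 1 ≠ 0 := by omega
  have hfact : q ^ 2 - 1 = (q - 1) * (q + 1) := by
    obtain ⟨k, rfl⟩ : ∃ k, q = k + 2 := ⟨q - 2, by omega⟩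
    have h1 : (k + 2) ^ 2 = (k + 2 - 1) * (k + 2 + 1) + 1 := by
      have : k + 2 - 1 = k + 1 := by omega
      rw [this]; ring
    omega
  have hf0 : f 0 = 0 := by simp [hf, zero_pow hr.ne']
  have hkey : ∀ x : F, (f x) ^ (q - 1) = g (x ^ (q - 1)) := by
    intro x
    simp only [hf, hg]
    rw [mul_pow, ← pow_mul, mul_comm r (q - 1), pow_mul]
  have hμ0 : ∀ y ∈ μ, y ≠ 0 := by
    rintro y hy rfl
    rw [hμ, Set.mem_setOf_eq, zero_pow (by omega : q + 1 ≠ 0)] at hy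
    exact zero_ne_one hy
  have hpow_mem : ∀ x : F, x ≠ 0 → x ^ (q - 1) ∈ μ := by
    intro x hx
    rw [hμ, Set.mem_setOf_eq, ← pow_mul, ← hfact, ← hF]
    exact FiniteField.pow_card_sub_one_eq_one x hx
  constructor
  · intro hbij
    have hfne : ∀ z : F, z ≠ 0 → f z ≠ 0 := by
      intro z hz hzf
      exact hz (hbij.1 (hzf.trans hf0.symm))
    constructor
    · by_contra hgcd
      set d := Nat.gcd r (q - 1) with hd
      have hd0 : 0 < d := Nat.gcd_pos_of_pos_left _ hr
      have hd2 : 2 ≤ d := by omega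
      have hddvd : d ∣ Fintype.card F - 1 := by
        rw [hF]
        exact dvd_trans (Nat.gcd_dvd_right r (q - 1)) (hfact ▸ dvd_mul_right _ _)
      obtain ⟨ζ, hζd, hζ1⟩ := haux_ne hd2 hddvd
      have hζq : ζ ^ (q - 1) = 1 := by
        obtain ⟨k, hk⟩ := Nat.gcd_dvd_right r (q - 1)
        rw [hk, pow_mul, hζd, one_pow]
      have hζr : ζ ^ r = 1 := by
        obtain ⟨k, hk⟩ := Nat.gcd_dvd_left r (q - 1)
        rw [hk, pow_mul, hζd, one_pow]
      apply hζ1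
      apply hbij.1
      show f ζ = f 1
      simp [hf, hζq, hζr]
    · have hmaps : Set.MapsTo g μ μ := by
        intro α hα
        obtain ⟨x, hx0, hxα⟩ := haux_surj hα
        rw [← hxα, ← hkey]
        exact hpow_mem _ (hfne x hx0)
      rw [← (Set.toFinite μ).injOn_iff_bijOn_of_mapsTo hmaps] at *
      intro α hα β hβ hgαβ
      obtain ⟨x₀, hx₀0, hx₀α⟩ := haux_surj hα
      obtain ⟨y₀, hy₀0, hy₀β⟩ := haux_surj hβ
      have hfx₀ : (f x₀) ^ (q - 1) = g α := by rw [hkey, hx₀α]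
      have hfy₀ : (f y₀) ^ (q - 1) = g α := by rw [hkey, hy₀β, hgαβ]
      have hfx₀0 : f x₀ ≠ 0 := hfne _ hx₀0
      have hfy₀0 : f y₀ ≠ 0 := hfne _ hy₀0
      -- f '' Xβ = Y where Xβ = {x | x^(q-1) = β}, Y = {y | y^(q-1) = g α}
      have himg : f '' {x : F | x ^ (q - 1) = β} = {y : F | y ^ (q - 1) = g α} := by
        apply Set.eq_of_subset_of_ncard_le
        · rintro - ⟨x, hx, rfl⟩
          rw [Set.mem_setOf_eq] at hx
          rw [Set.mem_setOf_eq, hkey, hx, hgαβ]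
        · rw [Set.ncard_image_of_injective _ hbij.1]
          exact le_of_eq (haux_fiber (f y₀) y₀ hfy₀ hy₀β hfy₀0 hy₀0)
        · exact Set.toFinite _
      have hmem : f x₀ ∈ f '' {x : F | x ^ (q - 1) = β} := by
        rw [himg, Set.mem_setOf_eq, hfx₀]
      obtain ⟨x', hx', hfx'⟩ := hmem
      rw [Set.mem_setOf_eq] at hx'
      rw [← hx₀α, ← hx', hbij.1 hfx']
  · rintro ⟨hgcd, hbij⟩
    rw [Finite.injective_iff_bijective.symm]
    have hfne : ∀ z : F, z ≠ 0 → f z ≠ 0 := by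
      intro z hz hzf
      have hmem := hbij.1 (hpow_mem z hz)
      have h2 : g (z ^ (q - 1)) = 0 := by rw [← hkey, hzf, zero_pow hq10]
      exact hμ0 _ hmem h2
    intro x y hxy
    by_cases hx : x = 0
    · subst hx
      by_contra hy
      have hy0 : y ≠ 0 := fun h => hy h.symm
      exact hfne y hy0 (by rw [← hxy]; exact hf0)
    · by_cases hy : y = 0
      · subst hy
        exact absurd (hxy.trans hf0) (hfne x hx)
      · have hfx0 : f x ≠ 0 := hfne x hx
        have hα : x ^ (q - 1) = y ^ (q - 1) := by
          apply hbij.2.1 (hpow_mem x hx) (hpow_mem y hy)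
          rw [← hkey, ← hkey]
          exact congrArg (· ^ (q - 1)) hxy
        have heval : h.eval (x ^ (q - 1)) ≠ 0 := by
          intro h0
          apply hfx0
          show x ^ r * h.eval (x ^ (q - 1)) = 0
          rw [h0, mul_zero]
        have hxr : x ^ r = y ^ r := by
          have : x ^ r * h.eval (x ^ (q - 1)) = y ^ r * h.eval (x ^ (q - 1)) := by
            conv_rhs => rw [hα]
            exact hxy
          exact mul_right_cancel₀ heval this
        have hc : (x * y⁻¹) ^ r = 1 ∧ (x * y⁻¹) ^ (q - 1) = 1 := by
          constructor <;> rw [mul_pow, inv_pow]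
          · rw [hxr, mul_inv_cancel₀ (pow_ne_zero r hy)]
          · rw [hα, mul_inv_cancel₀ (pow_ne_zero _ hy)]
        have hord : orderOf (x * y⁻¹) ∣ 1 := by
          rw [← hgcd]
          exact Nat.dvd_gcd (orderOf_dvd_of_pow_eq_one hc.1) (orderOf_dvd_of_pow_eq_one hc.2)
        have h1 : x * y⁻¹ = 1 := orderOf_eq_one_iff.1 (Nat.dvd_one.1 hord)
        field_simp at h1
        exact h1




lemma aux_muB {F : Type*} [Field F] [Fintype F] {q : ℕ} (hq2 : 2 ≤ q)
    (hF : Fintype.card F = q ^ 2)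
    (n : ℕ) (hn : 0 < n) (a b v : F) (ha : a ≠ 0) (hb : b ≠ 0) (hv : v ≠ 0)
    (hvμ : v ^ (q + 1) ≠ 1)
    (hadd : ∀ x y : F, (x + y) ^ q = x ^ q + y ^ q)
    (haux_ne : ∀ {d : ℕ}, 2 ≤ d → d ∣ Fintype.card F - 1 → ∃ ζ : F, ζ ^ d = 1 ∧ ζ ≠ 1)
    (haux_fiber : ∀ {m : ℕ} {c d : F} (x₀ y₀ : F), x₀ ^ m = c → y₀ ^ m = d → x₀ ≠ 0 → y₀ ≠ 0 →
      {x : F | x ^ m = c}.ncard = {x : F | x ^ m = d}.ncard) :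
    Set.BijOn (fun x : F => x ^ n * (a * (x + (v ^ q)⁻¹) ^ n + b * (x + v) ^ n) ^ (q - 1))
        {x : F | x ^ (q + 1) = 1} {x : F | x ^ (q + 1) = 1} ↔
      ((b * v ^ n / a) ^ (q + 1) ≠ 1 ∧ Nat.gcd n (q + 1) = 1) := by
  have hq10 : q - 1 ≠ 0 := by omega
  have hq1s : q - 1 + 1 = q := by omega
  have hfact : q ^ 2 - 1 = (q - 1) * (q + 1) := by
    obtain ⟨k, hk⟩ : ∃ k, q = k + 2 := ⟨q - 2, by omega⟩
    subst hk
    have h1 : (k + 2) ^ 2 = (k + 2 - 1) * (k + 2 + 1) + 1 := by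
      have : k + 2 - 1 = k + 1 := by omega
      rw [this]; ring
    omega
  have hqq : ∀ x : F, (x ^ q) ^ q = x := by
    intro x
    rw [← pow_mul, ← sq, ← hF, FiniteField.pow_card]
  have hstab : ∀ z : F, z ≠ 0 → (z ^ (q + 1)) ^ q = z ^ (q + 1) := by
    intro z hz
    have h1 : (z ^ (q + 1)) ^ (q - 1) = 1 := by
      rw [← pow_mul, mul_comm, ← hfact, ← hF]
      exact FiniteField.pow_card_sub_one_eq_one z hz
    calc (z ^ (q + 1)) ^ q = (z ^ (q + 1)) ^ (q - 1) * z ^ (q + 1) := by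
          rw [← pow_succ]; congr 1; omega
      _ = z ^ (q + 1) := by rw [h1, one_mul]
  have hnegq : (-1 : F) ^ q = -1 := by
    have h0 := hadd 1 (-1)
    simp only [add_neg_cancel, one_pow] at h0
    rw [zero_pow (by omega : q ≠ 0)] at h0
    linear_combination -h0
  have hneg1 : (-1 : F) ^ (q + 1) = 1 := by
    rw [pow_succ, hnegq]; ring
  -- notation
  set w : F := (v ^ q)⁻¹ with hw
  have hvq0 : v ^ q ≠ 0 := pow_ne_zero _ hv
  have hw0 : w ≠ 0 := inv_ne_zero hvq0
  have hCw : v ^ q * w = 1 := mul_inv_cancel₀ hvq0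
  have hwq : w ^ q = v⁻¹ := by
    rw [hw, inv_pow, hqq]
  set μ : Set F := {x : F | x ^ (q + 1) = 1} with hμdef
  set S' : Set F := {y : F | y ^ (q + 1) = v ^ (q + 1)} with hS'def
  set S : Set F := {u : F | u ^ (q + 1) = (v ^ n) ^ (q + 1)} with hSdef
  set β : F → F := fun x => a * (x + w) ^ n + b * (x + v) ^ n with hβdef
  set g : F → F := fun x => x ^ n * (β x) ^ (q - 1) with hgdef
  set ψ : F → F := fun x => (x + v) / (x + w) with hψdef
  set Aq : F := a ^ q / v ^ n with hAqdef
  set Cq : F := b ^ q * (v ^ q) ^ n with hCqdef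
  set M : F → F := fun u => (Aq * u + Cq) / (b * u + a) with hMdef
  -- basic membership facts
  have hμ0 : ∀ x ∈ μ, x ≠ 0 := by
    rintro x hx rfl
    rw [hμdef, Set.mem_setOf_eq, zero_pow (by omega : q + 1 ≠ 0)] at hx
    exact zero_ne_one hx
  have hμxx : ∀ x ∈ μ, x ^ q * x = 1 := by
    intro x hx
    rw [← pow_succ]
    exact hx
  have hxv : ∀ x ∈ μ, x + v ≠ 0 := by
    intro x hx hx0
    have hxe : x = -v := by linear_combination hx0
    rw [hμdef, Set.mem_setOf_eq, hxe, neg_eq_neg_one_mul, mul_pow, hneg1, one_mul] at hx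
    exact hvμ hx
  have hwμ : w ^ (q + 1) = (v ^ (q + 1))⁻¹ := by
    rw [hw, inv_pow, pow_right_comm, hstab v hv]
  have hxw : ∀ x ∈ μ, x + w ≠ 0 := by
    intro x hx hx0
    have hxe : x = -w := by linear_combination hx0
    rw [hμdef, Set.mem_setOf_eq, hxe, neg_eq_neg_one_mul, mul_pow, hneg1, one_mul, hwμ] at hx
    apply hvμ
    have := congrArg (v ^ (q+1) * ·) hx
    simpa [mul_inv_cancel₀ (pow_ne_zero (q+1) hv)] using this.symm
  have hS0 : ∀ u ∈ S, u ≠ 0 := by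
    rintro u hu rfl
    rw [hSdef, Set.mem_setOf_eq, zero_pow (by omega : q + 1 ≠ 0)] at hu
    exact (pow_ne_zero _ (pow_ne_zero _ hv)) hu.symm
  have hS'0 : ∀ y ∈ S', y ≠ 0 := by
    rintro y hy rfl
    rw [hS'def, Set.mem_setOf_eq, zero_pow (by omega : q + 1 ≠ 0)] at hy
    exact (pow_ne_zero _ hv) hy.symm
  -- β factorization
  have hbu : ∀ x ∈ μ, β x = (x + w) ^ n * (b * (ψ x) ^ n + a) := by
    intro x hx
    have h1 := hxw x hx
    rw [hβdef, hψdef]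
    simp only [div_pow]
    field_simp
    ring
  -- the Frobenius computation (*)
  have hstar : ∀ x ∈ μ, v ^ n * (x ^ n * (β x) ^ q) =
      a ^ q * (x + v) ^ n + b ^ q * ((v ^ q * v) ^ n * (x + w) ^ n) := by
    intro x hx
    have hxx := hμxx x hx
    have hβq : (β x) ^ q = a ^ q * (x ^ q + v⁻¹) ^ n + b ^ q * (x ^ q + v ^ q) ^ n := by
      rw [hβdef]
      simp only []
      rw [hadd, mul_pow, mul_pow, ← pow_right_comm (x+w), ← pow_right_comm (x+v),
        hadd x w, hadd x v, hwq]
    rw [hβq]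
    have e1 : v * (x * (x ^ q + v⁻¹)) = x + v := by
      field_simp
      linear_combination v * hxx
    have e2 : v * (x * (x ^ q + v ^ q)) = v ^ q * v * x + v := by
      linear_combination v * hxx
    have e3 : v ^ q * v * (x + w) = v ^ q * v * x + v := by
      linear_combination v * hCw
    have key : ∀ c y z : F, v * (x * y) = z →
        v ^ n * (x ^ n * (c * y ^ n)) = c * z ^ n := by
      intro c y z hzy
      rw [← hzy, mul_pow, mul_pow]
      ring
    calc v ^ n * (x ^ n * (a ^ q * (x ^ q + v⁻¹) ^ n + b ^ q * (x ^ q + v ^ q) ^ n))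
        = v ^ n * (x ^ n * (a ^ q * (x ^ q + v⁻¹) ^ n))
            + v ^ n * (x ^ n * (b ^ q * (x ^ q + v ^ q) ^ n)) := by ring
      _ = a ^ q * (x + v) ^ n + b ^ q * (v ^ q * v * x + v) ^ n := by
          rw [key _ _ _ e1, key _ _ _ e2]
      _ = a ^ q * (x + v) ^ n + b ^ q * ((v ^ q * v) ^ n * (x + w) ^ n) := by
          rw [← mul_pow, e3]
  -- ψ maps μ to S'
  have hψmaps : Set.MapsTo ψ μ S' := by
    intro x hx
    have hxx := hμxx x hx
    have h1 := hxv x hx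
    have h2 := hxw x hx
    have h4 : (x + v) ^ (q + 1) = (x ^ q + v ^ q) * (x + v) := by
      rw [pow_succ, hadd]
    have h5 : (x + w) ^ (q + 1) = (x ^ q + v⁻¹) * (x + w) := by
      rw [pow_succ, hadd, hwq]
    have h6 : (x ^ q + v ^ q) * (x + v) = v ^ (q + 1) * ((x ^ q + v⁻¹) * (x + w)) := by
      have hx0 : x ≠ 0 := hμ0 x hx
      have hxqi : x ^ q = x⁻¹ := eq_inv_of_mul_eq_one_left hxx
      have hvqi : v ^ q = w⁻¹ := by rw [hw, inv_inv]
      rw [pow_succ, hxqi, hvqi]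
      field_simp
      ring
    have h7 : (x ^ q + v⁻¹) * (x + w) ≠ 0 := by
      rw [← h5]
      exact pow_ne_zero _ h2
    rw [hS'def, Set.mem_setOf_eq, hψdef]
    simp only [div_pow]
    rw [h4, h5, h6, mul_div_assoc, div_self h7, mul_one]
  -- ψ injective on μ
  have hwv : w ≠ v := by
    intro h
    apply hvμ
    rw [h] at hCw
    rw [pow_succ, hCw]
  have hψinj : Set.InjOn ψ μ := by
    intro x hx y hy hxy
    simp only [hψdef] at hxy
    rw [div_eq_div_iff (hxw x hx) (hxw y hy)] at hxy
    have h8 : (x - y) * (w - v) = 0 := by linear_combination hxy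
    rcases mul_eq_zero.1 h8 with h | h
    · linear_combination h
    · exact absurd (by linear_combination h) hwv
  -- cardinalities
  have hcard1 : μ.ncard = S'.ncard := haux_fiber 1 v (one_pow _) rfl one_ne_zero hv
  have hcard2 : μ.ncard = S.ncard :=
    haux_fiber 1 (v ^ n) (one_pow _) rfl one_ne_zero (pow_ne_zero _ hv)
  have hψbij : Set.BijOn ψ μ S' := aux_bijOn_of_injOn hψinj hψmaps hcard1
  -- power map S' → S
  have hpmaps : Set.MapsTo (fun y : F => y ^ n) S' S := by
    intro y hy
    rw [hS'def, Set.mem_setOf_eq] at hy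
    rw [hSdef, Set.mem_setOf_eq, pow_right_comm, hy, pow_right_comm]
  -- M facts under hcond
  have hT : (b * v ^ n / a) ^ (q + 1) = b ^ (q + 1) * (v ^ n) ^ (q + 1) / a ^ (q + 1) := by
    rw [div_pow, mul_pow]
  have hgg : ∀ x : F, g x = x ^ n * (a * (x + (v ^ q)⁻¹) ^ n + b * (x + v) ^ n) ^ (q - 1) :=
    fun x => rfl
  -- g x = M ((ψ x)^n) whenever β x ≠ 0
  have hgM : ∀ x ∈ μ, β x ≠ 0 → g x = M ((ψ x) ^ n) := by
    intro x hx hβx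
    have hxw' := hxw x hx
    have hd : b * (ψ x) ^ n + a ≠ 0 := by
      intro h0
      apply hβx
      rw [hbu x hx, h0, mul_zero]
    have hq1 : (β x) ^ q = (β x) ^ (q - 1) * β x := by
      rw [← pow_succ, hq1s]
    have hgx : g x = v ^ n * (x ^ n * (β x) ^ q) / (v ^ n * β x) := by
      rw [hgdef]
      simp only []
      rw [hq1]
      field_simp
    have hueq : (ψ x) ^ n = (x + v) ^ n / (x + w) ^ n := by
      rw [hψdef]
      simp only [div_pow]
    have hMx : M ((ψ x) ^ n) =
        (a ^ q * (x + v) ^ n + b ^ q * ((v ^ q * v) ^ n * (x + w) ^ n)) / (v ^ n * β x) := by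
      rw [hMdef]
      simp only []
      rw [div_eq_div_iff hd (mul_ne_zero (pow_ne_zero _ hv) hβx)]
      rw [hueq, hAqdef, hCqdef, hβdef]
      simp only []
      field_simp
      ring
    rw [hgx, hstar x hx, hMx]
  constructor
  · -- BijOn → conditions
    intro hbij0
    have hbij : Set.BijOn g μ μ := hbij0
    have hzero' : ∀ x ∈ μ, β x ≠ 0 := by
      intro x hx hβ0
      have hmem : g x ∈ μ := hbij.mapsTo hx
      have hg0 : g x = 0 := by
        rw [hgdef]
        simp only []
        rw [hβ0, zero_pow hq10, mul_zero]
      exact hμ0 _ hmem hg0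
    have h1μ : (1 : F) ∈ μ := by
      rw [hμdef, Set.mem_setOf_eq, one_pow]
    constructor
    · -- t^(q+1) ≠ 1
      intro hT1
      have h1 : a ^ (q + 1) = b ^ (q + 1) * (v ^ n) ^ (q + 1) := by
        rw [hT] at hT1
        rw [div_eq_one_iff_eq (pow_ne_zero _ ha)] at hT1
        exact hT1.symm
      have hdet0 : Aq * a = Cq * b := by
        rw [hAqdef, hCqdef]
        have h1' : a ^ q * a = b ^ q * b * ((v ^ n) ^ q * v ^ n) := by
          rw [← pow_succ, ← pow_succ, ← pow_succ]
          exact h1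
        field_simp
        linear_combination h1'
      obtain ⟨ζ, hζp, hζ1⟩ := haux_ne (show 2 ≤ q + 1 by omega)
        (by rw [hF, hfact]; exact dvd_mul_left _ _)
      have hζμ : ζ ∈ μ := hζp
      have hβ1 := hzero' 1 h1μ
      have hβζ := hzero' ζ hζμ
      have hd1 : b * (ψ 1) ^ n + a ≠ 0 := by
        intro h0; apply hβ1; rw [hbu 1 h1μ, h0, mul_zero]
      have hdζ : b * (ψ ζ) ^ n + a ≠ 0 := by
        intro h0; apply hβζ; rw [hbu ζ hζμ, h0, mul_zero]
      have hM12 : M ((ψ 1) ^ n) = M ((ψ ζ) ^ n) := by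
        rw [hMdef]
        simp only []
        rw [div_eq_div_iff hd1 hdζ]
        linear_combination ((ψ 1) ^ n - (ψ ζ) ^ n) * hdet0
      have : (1 : F) = ζ := by
        apply hbij.injOn h1μ hζμ
        show g 1 = g ζ
        rw [hgM 1 h1μ hβ1, hgM ζ hζμ hβζ, hM12]
      exact hζ1 this.symm
    · -- gcd n (q+1) = 1
      by_contra hg
      set d := Nat.gcd n (q + 1) with hd
      have hd0 : 0 < d := Nat.gcd_pos_of_pos_left _ hn
      have hd2 : 2 ≤ d := by omega
      obtain ⟨ζ, hζd, hζ1⟩ := haux_ne hd2 (by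
        rw [hF, hfact]
        exact dvd_mul_of_dvd_right (Nat.gcd_dvd_right n (q + 1)) _)
      have hζn : ζ ^ n = 1 := by
        obtain ⟨k, hk⟩ := Nat.gcd_dvd_left n (q + 1)
        rw [hk, pow_mul, hζd, one_pow]
      have hζq : ζ ^ (q + 1) = 1 := by
        obtain ⟨k, hk⟩ := Nat.gcd_dvd_right n (q + 1)
        rw [hk, pow_mul, hζd, one_pow]
      have hy1 : v ∈ S' := by rw [hS'def, Set.mem_setOf_eq]
      have hy2 : ζ * v ∈ S' := by
        rw [hS'def, Set.mem_setOf_eq, mul_pow, hζq, one_mul]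
      obtain ⟨x1, hx1μ, hx1⟩ := hψbij.surjOn hy1
      obtain ⟨x2, hx2μ, hx2⟩ := hψbij.surjOn hy2
      have hne : x1 ≠ x2 := by
        intro h
        apply hζ1
        rw [h] at hx1
        have h2 : ζ * v = 1 * v := by rw [one_mul]; exact hx2.symm.trans hx1
        exact mul_right_cancel₀ hv h2
      apply hne
      apply hbij.injOn hx1μ hx2μ
      show g x1 = g x2
      rw [hgM x1 hx1μ (hzero' x1 hx1μ), hgM x2 hx2μ (hzero' x2 hx2μ), hx1, hx2,
        mul_pow, hζn, one_mul]
  · -- conditions → BijOn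
    rintro ⟨hcond, hgcdn⟩
    have hden : ∀ u ∈ S, b * u + a ≠ 0 := by
      intro u hu h0
      have hu0 : u ≠ 0 := hS0 u hu
      rw [hSdef, Set.mem_setOf_eq] at hu
      apply hcond
      have hae : a = -(b * u) := by linear_combination h0
      rw [hT, hae, neg_eq_neg_one_mul, mul_pow, hneg1, one_mul, mul_pow, ← hu]
      exact div_self (mul_ne_zero (pow_ne_zero _ hb) (pow_ne_zero _ hu0))
    have hdet : Aq * a - Cq * b ≠ 0 := by
      intro h0
      apply hcond
      rw [hAqdef, hCqdef] at h0
      have h1 : a ^ q * a = b ^ q * (v ^ q) ^ n * b * v ^ n := by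
        field_simp at h0
        linear_combination h0
      rw [hT, div_eq_one_iff_eq (pow_ne_zero _ ha), pow_succ b, pow_succ (v ^ n), pow_succ a]
      linear_combination -h1
    have hnum : ∀ u ∈ S, Aq * u + Cq ≠ 0 := by
      intro u hu h0
      have hu0 : u ≠ 0 := hS0 u hu
      rw [hSdef, Set.mem_setOf_eq] at hu
      have h1 : a ^ q * u = -(b ^ q * (v ^ q) ^ n * v ^ n) := by
        rw [hAqdef, hCqdef] at h0
        field_simp at h0
        linear_combination h0
      have h4 : (a ^ q) ^ (q + 1) * (v ^ n) ^ (q + 1)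
          = (b ^ q * (v ^ q) ^ n) ^ (q + 1) * (v ^ n) ^ (q + 1) := by
        calc (a ^ q) ^ (q + 1) * (v ^ n) ^ (q + 1)
            = (a ^ q) ^ (q + 1) * u ^ (q + 1) := by rw [hu]
          _ = (a ^ q * u) ^ (q + 1) := by rw [mul_pow]
          _ = (-(b ^ q * (v ^ q) ^ n * v ^ n)) ^ (q + 1) := by rw [h1]
          _ = (b ^ q * (v ^ q) ^ n * v ^ n) ^ (q + 1) := by
              rw [neg_eq_neg_one_mul, mul_pow, hneg1, one_mul]
          _ = (b ^ q * (v ^ q) ^ n) ^ (q + 1) * (v ^ n) ^ (q + 1) := by rw [mul_pow]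
      have h5 := mul_right_cancel₀ (pow_ne_zero _ (pow_ne_zero _ hv)) h4
      have ht0 : b * v ^ n / a ≠ 0 := div_ne_zero (mul_ne_zero hb (pow_ne_zero _ hv)) ha
      have hstabT := hstab _ ht0
      have h3 : ((b * v ^ n / a) ^ (q + 1)) ^ q = 1 := by
        rw [hT, div_pow, div_eq_one_iff_eq (pow_ne_zero _ (pow_ne_zero _ ha))]
        rw [mul_pow, pow_right_comm b, pow_right_comm (v ^ n) (q + 1) q,
          pow_right_comm v n q, pow_right_comm a, ← mul_pow]
        exact h5.symm
      rw [h3] at hstabT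
      exact hcond hstabT.symm
    have hβ0 : ∀ x ∈ μ, β x ≠ 0 := by
      intro x hx
      have hu : (ψ x) ^ n ∈ S := hpmaps (hψmaps hx)
      rw [hbu x hx]
      exact mul_ne_zero (pow_ne_zero _ (hxw x hx)) (hden _ hu)
    -- M maps S into μ
    have hAqq : Aq ^ q = a / (v ^ n) ^ q := by
      rw [hAqdef, div_pow, hqq]
    have hCqq : Cq ^ q = b * v ^ n := by
      rw [hCqdef, mul_pow, hqq, pow_right_comm (v ^ q) n q, hqq]
    have hMmaps : Set.MapsTo M S μ := by
      intro u hu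
      have hu0 : u ≠ 0 := hS0 u hu
      have hd := hden u hu
      have hn' := hnum u hu
      have huq : u ^ q * u = (v ^ n) ^ (q + 1) := by
        rw [← pow_succ]
        exact hu
      have hvnq0 : (v ^ n) ^ q ≠ 0 := pow_ne_zero _ (pow_ne_zero _ hv)
      have hi : (Aq * u + Cq) ^ q * u = v ^ n * (b * u + a) := by
        have e : (Aq * u + Cq) ^ q = a / (v ^ n) ^ q * u ^ q + b * v ^ n := by
          rw [hadd, mul_pow, hAqq, hCqq]
        apply mul_right_cancel₀ hvnq0
        rw [e]
        have e2 : (a / (v ^ n) ^ q * u ^ q + b * v ^ n) * u * (v ^ n) ^ q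
            = a * (u ^ q * u) + b * v ^ n * u * (v ^ n) ^ q := by
          field_simp
        rw [e2, huq]
        ring
      have hii : (b * u + a) ^ q * u = v ^ n * (Aq * u + Cq) := by
        have e : (b * u + a) ^ q = b ^ q * u ^ q + a ^ q := by
          rw [hadd, mul_pow]
        have e3 : v ^ n * (Aq * u + Cq) = a ^ q * u + b ^ q * (v ^ q) ^ n * v ^ n := by
          rw [hAqdef, hCqdef]
          field_simp
        rw [e, e3]
        linear_combination b ^ q * huq
      rw [hμdef, Set.mem_setOf_eq, hMdef]
      simp only []
      rw [pow_succ, div_pow, div_mul_div_comm,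
        div_eq_one_iff_eq (mul_ne_zero (pow_ne_zero _ hd) hd)]
      have key : (Aq * u + Cq) ^ q * (Aq * u + Cq) * u = (b * u + a) ^ q * (b * u + a) * u := by
        linear_combination (Aq * u + Cq) * hi - (b * u + a) * hii
      exact mul_right_cancel₀ hu0 key
    have hpinj : Set.InjOn (fun y : F => y ^ n) S' := by
      intro y1 h1 y2 h2 he
      simp only [] at he
      have h20 : y2 ≠ 0 := hS'0 y2 h2
      rw [hS'def, Set.mem_setOf_eq] at h1 h2
      have hc1 : (y1 / y2) ^ n = 1 := by
        rw [div_pow, he, div_self (pow_ne_zero _ h20)]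
      have hc2 : (y1 / y2) ^ (q + 1) = 1 := by
        rw [div_pow, h1, h2, div_self (pow_ne_zero _ hv)]
      have hord : orderOf (y1 / y2) ∣ Nat.gcd n (q + 1) :=
        Nat.dvd_gcd (orderOf_dvd_of_pow_eq_one hc1) (orderOf_dvd_of_pow_eq_one hc2)
      rw [hgcdn] at hord
      have h9 : y1 / y2 = 1 := orderOf_eq_one_iff.1 (Nat.eq_one_of_dvd_one hord)
      field_simp at h9
      exact h9
    have hMinj : Set.InjOn M S := by
      intro u1 h1 u2 h2 he
      rw [hMdef] at he
      simp only [] at he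
      rw [div_eq_div_iff (hden u1 h1) (hden u2 h2)] at he
      have h8 : (u1 - u2) * (Aq * a - Cq * b) = 0 := by linear_combination he
      rcases mul_eq_zero.1 h8 with h | h
      · linear_combination h
      · exact absurd h hdet
    have hppbij : Set.BijOn (fun y : F => y ^ n) S' S :=
      aux_bijOn_of_injOn hpinj hpmaps (hcard1.symm.trans hcard2)
    have hMbij : Set.BijOn M S μ := aux_bijOn_of_injOn hMinj hMmaps hcard2.symm
    have hcomp : Set.BijOn (M ∘ (fun y : F => y ^ n) ∘ ψ) μ μ :=
      (hMbij.comp hppbij).comp hψbij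
    have heq : Set.EqOn (M ∘ (fun y : F => y ^ n) ∘ ψ) g μ := by
      intro x hx
      exact (hgM x hx (hβ0 x hx)).symm
    exact hcomp.congr heq




theorem stmt10 (q : ℕ) (F : Type*) [Field F] [Fintype F]
    (hF : Fintype.card F = q ^ 2)
    (r n : ℕ) (hr : 0 < r) (hn : 0 < n) (hrn : r ≡ n [MOD q + 1])
    (a b v : F) (ha : a ≠ 0) (hb : b ≠ 0) (hv : v ≠ 0)
    (hvμ : v ^ (q + 1) ≠ 1)
    (B : F[X]) (hB : B = C a * (X + C (v ^ q)⁻¹) ^ n + C b * (X + C v) ^ n) :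
    Function.Bijective (fun x : F => x ^ r * B.eval (x ^ (q - 1))) ↔
      (b * v ^ n / a) ^ (q + 1) ≠ 1 ∧
        Nat.gcd r (q - 1) = 1 ∧ Nat.gcd n (q + 1) = 1 := by
  have hq2 : 2 ≤ q := by
    by_contra hq
    push_neg at hq
    interval_cases q <;>
      simp_all <;> exact absurd hF (by have := Fintype.one_lt_card (α := F); omega)
  -- characteristic facts
  obtain ⟨p, hc⟩ := CharP.exists F
  haveI : CharP F p := hc
  haveI hpp : Fact p.Prime := ⟨CharP.char_is_prime F p⟩
  obtain ⟨k, hk⟩ := FiniteField.card F p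
  have hqdvd : q ∣ p ^ (k : ℕ) := by
    rw [← hk.2, hF]
    exact dvd_pow_self q (by norm_num)
  obtain ⟨j, hjk, hqj⟩ := (Nat.dvd_prime_pow hpp.1).1 hqdvd
  have hadd : ∀ x y : F, (x + y) ^ q = x ^ q + y ^ q := by
    intro x y
    rw [hqj]
    exact add_pow_char_pow x y p j
  have hμeq : ∀ x : F, x ∈ {x : F | x ^ (q + 1) = 1} ↔ x ^ (q + 1) = 1 := fun _ => Iff.rfl
  -- Zieve reduction
  rw [aux_zieve hq2 hF r hr B (fun {d} h1 h2 => aux_exists_ne_one h1 h2)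
    (fun {y} hy => aux_pow_surj hq2 hF hy)
    (fun {m} {c d} x₀ y₀ h1 h2 h3 h4 => aux_fiber_ncard x₀ y₀ h1 h2 h3 h4)]
  -- switch from exponent r to exponent n on μ
  have hEq : Set.EqOn (fun t : F => t ^ r * B.eval t ^ (q - 1))
      (fun x : F => x ^ n * (a * (x + (v ^ q)⁻¹) ^ n + b * (x + v) ^ n) ^ (q - 1))
      {x : F | x ^ (q + 1) = 1} := by
    intro x hx
    rw [Set.mem_setOf_eq] at hx
    simp only []
    have hBx : B.eval x = a * (x + (v ^ q)⁻¹) ^ n + b * (x + v) ^ n := by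
      simp [hB]
    have hrn' : r % (q + 1) = n % (q + 1) := hrn
    rw [hBx, pow_eq_pow_mod r hx, pow_eq_pow_mod n hx, hrn']
  have hbijiff : Set.BijOn (fun t : F => t ^ r * B.eval t ^ (q - 1))
      {x : F | x ^ (q + 1) = 1} {x : F | x ^ (q + 1) = 1} ↔
      Set.BijOn (fun x : F => x ^ n * (a * (x + (v ^ q)⁻¹) ^ n + b * (x + v) ^ n) ^ (q - 1))
      {x : F | x ^ (q + 1) = 1} {x : F | x ^ (q + 1) = 1} :=
    ⟨fun h => h.congr hEq, fun h => h.congr hEq.symm⟩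
  rw [hbijiff, aux_muB hq2 hF n hn a b v ha hb hv hvμ hadd
    (fun {d} h1 h2 => aux_exists_ne_one h1 h2)
    (fun {m} {c d} x₀ y₀ h1 h2 h3 h4 => aux_fiber_ncard x₀ y₀ h1 h2 h3 h4)]
  tauto
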